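/- Let V_0 : ℤ → ℝ, ε_1, ε_2 ∈ ℝ, and let ψ_1, ψ_2 : ℤ → ℝ satisfy −Δ²ψ_j(n) + V_0(n)ψ_j(n) = ε_j ψ_j(n+2) for all n (j = 1, 2). Assume ψ_1(n) ≠ 0 and C(ψ_1, ψ_2)(n) = ψ_1(n)ψ_2(n+1) − ψ_1(n+1)ψ_2(n) ≠ 0 for all n. Set f_1(n) = Δψ_1(n)/ψ_1(n), V_1(n) = V_0(n+1) − 2Δf_1(n+1), ψ̃_2(n) = −Δψ_2(n) + f_1(n)ψ_2(n), f_2(n) = Δψ̃_2(n)/ψ̃_2(n), and V_2(n) = V_1(n+1) − 2Δf_2(n+1). Then for all n ∈ ℤ: V_2(n) = V_0(n+2) − 2Δg(n), where g(n) = (ψ_1(n+3)ψ_2(n+1) − ψ_1(n+1)ψ_2(n+3)) / (ψ_1(n+2)ψ_2(n+1) − ψ_1(n+1)ψ_2(n+2)). In particular V_2 is unchanged when ψ_1 and ψ_2 are interchanged (Bianchi property). -/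

import Mathlib

/-!
Writing `C` for the Casoratian of `ψ₁, ψ₂`, the first Darboux step turns `ψ₂` into
`ψ̃₂ = -C / ψ₁`. Since `Δu / u = u(n+1)/u(n) - 1`, the two logarithmic differences that enter
`V₂` combine to `f₁(n+2) + f₂(n+1) = g(n) - 2`: expanding both Casoratians, the terms
`ψ₁(n+1) ψ₁(n+3) ψ₂(n+2)` cancel and a factor `ψ₁(n+2)` divides out. Taking one more difference
gives the formula for `V₂`.
-/

section DiscreteDarboux

variable {K : Type*} [Field K]

def casoratian (ψ₁ ψ₂ : ℤ → K) (n : ℤ) : K := ψ₁ n * ψ₂ (n + 1) - ψ₁ (n + 1) * ψ₂ n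

def logDiff (u : ℤ → K) (n : ℤ) : K := (u (n + 1) - u n) / u n

lemma logDiff_eq_div_sub_one {u : ℤ → K} {n : ℤ} (hu : u n ≠ 0) :
    logDiff u n = u (n + 1) / u n - 1 := by
  rw [logDiff, sub_div, div_self hu]

def darboux (ψ₁ ψ₂ : ℤ → K) (n : ℤ) : K := -(ψ₂ (n + 1) - ψ₂ n) + logDiff ψ₁ n * ψ₂ n

lemma darboux_eq_neg_casoratian_div (ψ₂ : ℤ → K) {ψ₁ : ℤ → K} {n : ℤ} (hψ₁ : ψ₁ n ≠ 0) :
    darboux ψ₁ ψ₂ n = -casoratian ψ₁ ψ₂ n / ψ₁ n := by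
  rw [darboux, logDiff, casoratian]
  field_simp
  ring

lemma logDiff_add_logDiff_darboux (ψ₂ : ℤ → K) {ψ₁ : ℤ → K} {m : ℤ} (h₀ : ψ₁ m ≠ 0)
    (h₁ : ψ₁ (m + 1) ≠ 0) (hC₀ : casoratian ψ₁ ψ₂ m ≠ 0) :
    logDiff ψ₁ (m + 1) + logDiff (darboux ψ₁ ψ₂) m =
      (ψ₁ m * ψ₂ (m + 2) - ψ₁ (m + 2) * ψ₂ m) / casoratian ψ₁ ψ₂ m - 2 := by
  have hd₀ := darboux_eq_neg_casoratian_div ψ₂ h₀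
  have hd₀_ne : darboux ψ₁ ψ₂ m ≠ 0 := hd₀ ▸ div_ne_zero (neg_ne_zero.mpr hC₀) h₀
  rw [logDiff_eq_div_sub_one h₁, logDiff_eq_div_sub_one hd₀_ne, hd₀, darboux_eq_neg_casoratian_div ψ₂ h₁]
  field_simp
  simp only [casoratian, add_assoc m 1 1, one_add_one_eq_two]
  ring

end DiscreteDarboux

theorem stmt_18_general (V0 : ℤ → ℝ) (ψ1 ψ2 : ℤ → ℝ)
    (hne : ∀ n : ℤ, ψ1 n ≠ 0)
    (hCne : ∀ n : ℤ, ψ1 n * ψ2 (n+1) - ψ1 (n+1) * ψ2 n ≠ 0)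
    (f1 : ℤ → ℝ)
    (hf1 : ∀ n : ℤ, f1 n = (ψ1 (n+1) - ψ1 n) / ψ1 n)
    (V1 : ℤ → ℝ)
    (hV1 : ∀ n : ℤ, V1 n = V0 (n+1) - 2 * (f1 (n+2) - f1 (n+1)))
    (ψt2 : ℤ → ℝ)
    (hψt2 : ∀ n : ℤ, ψt2 n = -(ψ2 (n+1) - ψ2 n) + f1 n * ψ2 n)
    (f2 : ℤ → ℝ)
    (hf2 : ∀ n : ℤ, f2 n = (ψt2 (n+1) - ψt2 n) / ψt2 n)
    (V2 : ℤ → ℝ)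
    (hV2 : ∀ n : ℤ, V2 n = V1 (n+1) - 2 * (f2 (n+2) - f2 (n+1)))
    (g : ℤ → ℝ)
    (hg : ∀ n : ℤ, g n = (ψ1 (n+3) * ψ2 (n+1) - ψ1 (n+1) * ψ2 (n+3)) /
      (ψ1 (n+2) * ψ2 (n+1) - ψ1 (n+1) * ψ2 (n+2))) :
    ∀ n : ℤ, V2 n = V0 (n+2) - 2 * (g (n+1) - g n) := by
  obtain rfl : f1 = logDiff ψ1 := funext hf1
  obtain rfl : f2 = logDiff ψt2 := funext hf2
  obtain rfl : ψt2 = darboux ψ1 ψ2 := funext hψt2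
  have hsum : ∀ n, logDiff ψ1 (n + 2) + logDiff (darboux ψ1 ψ2) (n + 1) = g n - 2 := by
    intro n
    have h := logDiff_add_logDiff_darboux ψ2 (hne (n + 1)) (hne (n + 1 + 1)) (hCne _)
    rw [casoratian] at h
    rw [hg, ← neg_div_neg_eq]
    ring_nf at h ⊢
    exact h
  intro n
  have h₀ := hsum n
  have h₁ := hsum (n + 1)
  rw [hV2, hV1]
  ring_nf at h₀ h₁ ⊢
  linarith

/-- Second-order Darboux (Crum) step: with the notation of the
iterated transformation, V₂(n) = V₀(n+2) − 2Δg(n) where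
g(n) = (ψ₁(n+3)ψ₂(n+1) − ψ₁(n+1)ψ₂(n+3))/(ψ₁(n+2)ψ₂(n+1) − ψ₁(n+1)ψ₂(n+2));
in particular V₂ is symmetric under interchange of ψ₁ and ψ₂ (Bianchi property). -/
theorem stmt_18 (V0 : ℤ → ℝ) (ε1 ε2 : ℝ) (ψ1 ψ2 : ℤ → ℝ)
    (hψ1 : ∀ n : ℤ, -(ψ1 (n+2) - 2 * ψ1 (n+1) + ψ1 n) + V0 n * ψ1 n = ε1 * ψ1 (n+2))
    (hψ2 : ∀ n : ℤ, -(ψ2 (n+2) - 2 * ψ2 (n+1) + ψ2 n) + V0 n * ψ2 n = ε2 * ψ2 (n+2))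
    (hne : ∀ n : ℤ, ψ1 n ≠ 0)
    (hCne : ∀ n : ℤ, ψ1 n * ψ2 (n+1) - ψ1 (n+1) * ψ2 n ≠ 0)
    (f1 : ℤ → ℝ)
    (hf1 : ∀ n : ℤ, f1 n = (ψ1 (n+1) - ψ1 n) / ψ1 n)
    (V1 : ℤ → ℝ)
    (hV1 : ∀ n : ℤ, V1 n = V0 (n+1) - 2 * (f1 (n+2) - f1 (n+1)))
    (ψt2 : ℤ → ℝ)
    (hψt2 : ∀ n : ℤ, ψt2 n = -(ψ2 (n+1) - ψ2 n) + f1 n * ψ2 n)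
    (f2 : ℤ → ℝ)
    (hf2 : ∀ n : ℤ, f2 n = (ψt2 (n+1) - ψt2 n) / ψt2 n)
    (V2 : ℤ → ℝ)
    (hV2 : ∀ n : ℤ, V2 n = V1 (n+1) - 2 * (f2 (n+2) - f2 (n+1)))
    (g : ℤ → ℝ)
    (hg : ∀ n : ℤ, g n = (ψ1 (n+3) * ψ2 (n+1) - ψ1 (n+1) * ψ2 (n+3)) /
      (ψ1 (n+2) * ψ2 (n+1) - ψ1 (n+1) * ψ2 (n+2))) :
    ∀ n : ℤ, V2 n = V0 (n+2) - 2 * (g (n+1) - g n) :=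
  stmt_18_general V0 ψ1 ψ2 hne hCne f1 hf1 V1 hV1 ψt2 hψt2 f2 hf2 V2 hV2 g hg
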